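/- arXiv:2311.03962 — 3 statements merged into one kernel-verified Lean document; each statement's English description precedes it below -/
import Mathlib

section
/- Let R be a commutative local ring with maximal ideal m, let ε ∈ m, and let V be an inner product space over R. If B₁ = (u₁,…,uₙ) is an orthogonal basis of V, then B₂ = (u₁ + ε u₂, u₂ − ε q(u₂) q(u₁)⁻¹ u₁, u₃, …, uₙ) is also an orthogonal basis of V; moreover B₁ ≡ B₂ mod m (the two bases have the same image in V ⊗_R R/m) and B₁ ≈_R B₂. -/
open Function TensorProduct

/-- `(V, B)` is an inner product space over the commutative ring `R`: `V` is a
finite rank free `R`-module and `B` is a non-degenerate symmetric bilinear form on `V`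
(non-degenerate: the induced map `V → Hom_R(V, R)` is bijective). -/
structure IsInnerProductSpace (R : Type*) [CommRing R] (V : Type*) [AddCommGroup V]
    [Module R V] (B : LinearMap.BilinForm R V) : Prop where
  free : Module.Free R V
  finite : Module.Finite R V
  symm : ∀ x y, B x y = B y x
  nondegenerate : Function.Bijective B

section IPSDefs

variable {R : Type*} [CommRing R] {V : Type*} [AddCommGroup V] [Module R V]

/-- A basis `b` of `V` is an orthogonal basis for the bilinear form `B` if
`B (b i) (b j) = 0` for all `i ≠ j`. -/
def IsOrthoBasis {n : ℕ} (B : LinearMap.BilinForm R V) (b : Module.Basis (Fin n) R V) : Prop :=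
  ∀ i j, i ≠ j → B (b i) (b j) = 0

/-- Two orthogonal bases `b`, `c` of `V` are chain equivalent if there is a sequence
`s 0, …, s r` of orthogonal bases of `V` with `s 0 = b`, `s r = c` and consecutive
bases sharing at least `n - 2` basis vectors. -/
def ChainEquiv {n : ℕ} (B : LinearMap.BilinForm R V) (b c : Module.Basis (Fin n) R V) : Prop :=
  ∃ (r : ℕ) (s : Fin (r + 1) → Module.Basis (Fin n) R V),
    (∀ i, IsOrthoBasis B (s i)) ∧ s 0 = b ∧ s (Fin.last r) = c ∧
    ∀ i : Fin r, n - 2 ≤ (Set.range (s i.castSucc) ∩ Set.range (s i.succ)).ncard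

end IPSDefs

/-- Let `(R, m)` be a commutative local ring, `ε ∈ m`, and let `(V, B)` be an inner
product space over `R` with orthogonal basis `b = (u₁, …, uₙ)`.  Then
`(u₁ + ε u₂, u₂ - ε q(u₂) q(u₁)⁻¹ u₁, u₃, …, uₙ)` is again an orthogonal basis of `V`,
it is congruent to `b` modulo `m` and it is chain equivalent to `b` over `R`. -/
theorem orthoBasis_elementary_move {R : Type*} [CommRing R] [IsLocalRing R]
    {V : Type*} [AddCommGroup V] [Module R V] (B : LinearMap.BilinForm R V)
    (hB : IsInnerProductSpace R V B) (ε : R) (hε : ε ∈ IsLocalRing.maximalIdeal R)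
    {n : ℕ} (hn : 2 ≤ n) (b : Module.Basis (Fin n) R V) (hb : IsOrthoBasis B b)
    (h1 : IsUnit (B (b ⟨0, by omega⟩) (b ⟨0, by omega⟩))) :
    ∃ b₂ : Module.Basis (Fin n) R V,
      b₂ ⟨0, by omega⟩ = b ⟨0, by omega⟩ + ε • b ⟨1, by omega⟩ ∧
      b₂ ⟨1, by omega⟩ = b ⟨1, by omega⟩ -
        (ε * B (b ⟨1, by omega⟩) (b ⟨1, by omega⟩) * ((h1.unit⁻¹ : Rˣ) : R)) • b ⟨0, by omega⟩ ∧
      (∀ i : Fin n, 2 ≤ (i : ℕ) → b₂ i = b i) ∧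
      IsOrthoBasis B b₂ ∧
      (∀ i, b₂ i - b i ∈ (IsLocalRing.maximalIdeal R) • (⊤ : Submodule R V)) ∧
      ChainEquiv B b b₂ := by
  classical
  have z0 : Fin n := ⟨0, by omega⟩
  -- abbreviations (plain lets via have would lose defs; use explicit terms)
  clear z0
  set c : R := ε * B (b ⟨1, by omega⟩) (b ⟨1, by omega⟩) * ((h1.unit⁻¹ : Rˣ) : R) with hc
  have hcm : c ∈ IsLocalRing.maximalIdeal R := by
    rw [hc, mul_assoc]
    exact Ideal.mul_mem_right _ _ hε
  have hinv : ((h1.unit⁻¹ : Rˣ) : R) * B (b ⟨0, by omega⟩) (b ⟨0, by omega⟩) = 1 :=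
    h1.val_inv_mul
  have hcq0 : c * B (b ⟨0, by omega⟩) (b ⟨0, by omega⟩)
      = ε * B (b ⟨1, by omega⟩) (b ⟨1, by omega⟩) := by
    rw [hc, mul_assoc, mul_assoc, hinv, mul_one]
  have hdu : IsUnit (1 + ε * c) := by
    by_contra h
    have hdm : 1 + ε * c ∈ IsLocalRing.maximalIdeal R := h
    have h1m : (1 : R) ∈ IsLocalRing.maximalIdeal R := by
      have := Ideal.sub_mem _ hdm (Ideal.mul_mem_right c _ hε)
      simpa using this
    exact (IsLocalRing.maximalIdeal.isMaximal R).ne_top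
      (Ideal.eq_top_of_isUnit_mem _ h1m isUnit_one)
  set di : R := ((hdu.unit⁻¹ : Rˣ) : R) with hdi
  have hdinv : di * (1 + ε * c) = 1 := hdu.val_inv_mul
  set v : Fin n → V := fun i =>
    if (i : ℕ) = 0 then b ⟨0, by omega⟩ + ε • b ⟨1, by omega⟩
    else if (i : ℕ) = 1 then b ⟨1, by omega⟩ - c • b ⟨0, by omega⟩
    else b i with hv
  set w : Fin n → V := fun i =>
    if (i : ℕ) = 0 then di • b ⟨0, by omega⟩ - (di * ε) • b ⟨1, by omega⟩
    else if (i : ℕ) = 1 then (di * c) • b ⟨0, by omega⟩ + di • b ⟨1, by omega⟩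
    else b i with hw
  have hvz0 : v ⟨0, by omega⟩ = b ⟨0, by omega⟩ + ε • b ⟨1, by omega⟩ := by simp [hv]
  have hvz1 : v ⟨1, by omega⟩ = b ⟨1, by omega⟩ - c • b ⟨0, by omega⟩ := by simp [hv]
  have hwz0 : w ⟨0, by omega⟩ = di • b ⟨0, by omega⟩ - (di * ε) • b ⟨1, by omega⟩ := by simp [hw]
  have hwz1 : w ⟨1, by omega⟩ = (di * c) • b ⟨0, by omega⟩ + di • b ⟨1, by omega⟩ := by simp [hw]
  have hvi : ∀ i : Fin n, 2 ≤ (i : ℕ) → v i = b i := by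
    intro i hi
    simp only [hv]
    rw [if_neg (by omega), if_neg (by omega)]
  have hwi : ∀ i : Fin n, 2 ≤ (i : ℕ) → w i = b i := by
    intro i hi
    simp only [hw]
    rw [if_neg (by omega), if_neg (by omega)]
  set e : V →ₗ[R] V := Module.Basis.constr b ℕ v with he
  set g : V →ₗ[R] V := Module.Basis.constr b ℕ w with hg
  have heb : ∀ i, e (b i) = v i := fun i => b.constr_basis ℕ v i
  have hgb : ∀ i, g (b i) = w i := fun i => b.constr_basis ℕ w i
  have hge : g.comp e = LinearMap.id := by
    apply b.ext
    intro i
    rcases Nat.lt_or_ge (i : ℕ) 2 with hi | hi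
    · interval_cases h : (i : ℕ)
      · have hiz : i = ⟨0, by omega⟩ := Fin.ext h
        rw [LinearMap.comp_apply, LinearMap.id_apply, hiz, heb, hvz0, map_add, map_smul,
          hgb, hgb, hwz0, hwz1]
        match_scalars <;> first | ring1 | linear_combination hdinv | linear_combination -hdinv
      · have hiz : i = ⟨1, by omega⟩ := Fin.ext h
        rw [LinearMap.comp_apply, LinearMap.id_apply, hiz, heb, hvz1, map_sub, map_smul,
          hgb, hgb, hwz0, hwz1]
        match_scalars <;> first | ring1 | linear_combination hdinv | linear_combination -hdinv
    · rw [LinearMap.comp_apply, LinearMap.id_apply, heb, hvi i hi, hgb, hwi i hi]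
  have heg : e.comp g = LinearMap.id := by
    apply b.ext
    intro i
    rcases Nat.lt_or_ge (i : ℕ) 2 with hi | hi
    · interval_cases h : (i : ℕ)
      · have hiz : i = ⟨0, by omega⟩ := Fin.ext h
        rw [LinearMap.comp_apply, LinearMap.id_apply, hiz, hgb, hwz0, map_sub, map_smul,
          map_smul, heb, heb, hvz0, hvz1]
        match_scalars <;> first | ring1 | linear_combination hdinv | linear_combination -hdinv
      · have hiz : i = ⟨1, by omega⟩ := Fin.ext h
        rw [LinearMap.comp_apply, LinearMap.id_apply, hiz, hgb, hwz1, map_add, map_smul,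
          map_smul, heb, heb, hvz0, hvz1]
        match_scalars <;> first | ring1 | linear_combination hdinv | linear_combination -hdinv
    · rw [LinearMap.comp_apply, LinearMap.id_apply, hgb, hwi i hi, heb, hvi i hi]
  set E : V ≃ₗ[R] V := LinearEquiv.ofLinear e g heg hge with hE
  set b₂ : Module.Basis (Fin n) R V := b.map E with hb₂
  have hb₂i : ∀ i, b₂ i = v i := by
    intro i
    rw [hb₂, Module.Basis.map_apply]
    exact heb i
  have hb₂0 : b₂ ⟨0, by omega⟩ = b ⟨0, by omega⟩ + ε • b ⟨1, by omega⟩ := by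
    rw [hb₂i, hvz0]
  have hb₂1 : b₂ ⟨1, by omega⟩ = b ⟨1, by omega⟩ - c • b ⟨0, by omega⟩ := by
    rw [hb₂i, hvz1]
  have hb₂2 : ∀ i : Fin n, 2 ≤ (i : ℕ) → b₂ i = b i := fun i hi => by rw [hb₂i, hvi i hi]
  -- orthogonality
  have hortho : IsOrthoBasis B b₂ := by
    intro i j hij
    have hijv : (i : ℕ) ≠ (j : ℕ) := fun h => hij (Fin.ext h)
    rcases Nat.lt_or_ge (i : ℕ) 2 with hi | hi
    · rcases Nat.lt_or_ge (j : ℕ) 2 with hj | hj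
      · -- i, j ∈ {0, 1}, i ≠ j
        interval_cases h : (i : ℕ) <;> interval_cases h' : (j : ℕ)
        · omega
        · have hiz : i = ⟨0, by omega⟩ := Fin.ext h
          have hjz : j = ⟨1, by omega⟩ := Fin.ext h'
          rw [hiz, hjz, hb₂0, hb₂1]
          simp only [map_add, map_sub, map_smul, LinearMap.add_apply, LinearMap.sub_apply,
            LinearMap.smul_apply, smul_eq_mul]
          rw [hb ⟨0, by omega⟩ ⟨1, by omega⟩ (by simp [Fin.ext_iff]),
            hb ⟨1, by omega⟩ ⟨0, by omega⟩ (by simp [Fin.ext_iff])]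
          first
          | linear_combination (-(ε * B (b ⟨1, by omega⟩) (b ⟨1, by omega⟩))) * hinv
          | linear_combination (ε * B (b ⟨1, by omega⟩) (b ⟨1, by omega⟩)) * hinv
        · have hiz : i = ⟨1, by omega⟩ := Fin.ext h
          have hjz : j = ⟨0, by omega⟩ := Fin.ext h'
          rw [hiz, hjz, hb₂0, hb₂1]
          simp only [map_add, map_sub, map_smul, LinearMap.add_apply, LinearMap.sub_apply,
            LinearMap.smul_apply, smul_eq_mul]
          rw [hb ⟨0, by omega⟩ ⟨1, by omega⟩ (by simp [Fin.ext_iff]),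
            hb ⟨1, by omega⟩ ⟨0, by omega⟩ (by simp [Fin.ext_iff])]
          first
          | linear_combination (-(ε * B (b ⟨1, by omega⟩) (b ⟨1, by omega⟩))) * hinv
          | linear_combination (ε * B (b ⟨1, by omega⟩) (b ⟨1, by omega⟩)) * hinv
        · omega
      · -- j ≥ 2
        rw [hb₂2 j hj]
        have hj0 : (⟨0, by omega⟩ : Fin n) ≠ j := by simp [Fin.ext_iff]; omega
        have hj1 : (⟨1, by omega⟩ : Fin n) ≠ j := by simp [Fin.ext_iff]; omega
        interval_cases h : (i : ℕ)
        · have hiz : i = ⟨0, by omega⟩ := Fin.ext h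
          rw [hiz, hb₂0]
          simp only [map_add, map_smul, LinearMap.add_apply, LinearMap.smul_apply, smul_eq_mul]
          rw [hb _ _ hj0, hb _ _ hj1]
          ring
        · have hiz : i = ⟨1, by omega⟩ := Fin.ext h
          rw [hiz, hb₂1]
          simp only [map_sub, map_smul, LinearMap.sub_apply, LinearMap.smul_apply, smul_eq_mul]
          rw [hb _ _ hj0, hb _ _ hj1]
          ring
    · rw [hb₂2 i hi]
      rcases Nat.lt_or_ge (j : ℕ) 2 with hj | hj
      · have hi0 : i ≠ (⟨0, by omega⟩ : Fin n) := by simp [Fin.ext_iff]; omega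
        have hi1 : i ≠ (⟨1, by omega⟩ : Fin n) := by simp [Fin.ext_iff]; omega
        interval_cases h : (j : ℕ)
        · have hjz : j = ⟨0, by omega⟩ := Fin.ext h
          rw [hjz, hb₂0, map_add, map_smul]
          simp only [smul_eq_mul]
          rw [hb _ _ hi0, hb _ _ hi1]
          ring
        · have hjz : j = ⟨1, by omega⟩ := Fin.ext h
          rw [hjz, hb₂1, map_sub, map_smul]
          simp only [smul_eq_mul]
          rw [hb _ _ hi0, hb _ _ hi1]
          ring
      · rw [hb₂2 j hj]
        exact hb i j hij
  -- congruence mod m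
  have hmod : ∀ i, b₂ i - b i ∈ (IsLocalRing.maximalIdeal R) • (⊤ : Submodule R V) := by
    intro i
    rcases Nat.lt_or_ge (i : ℕ) 2 with hi | hi
    · interval_cases h : (i : ℕ)
      · have hiz : i = ⟨0, by omega⟩ := Fin.ext h
        rw [hiz, hb₂0, add_sub_cancel_left]
        exact Submodule.smul_mem_smul hε Submodule.mem_top
      · have hiz : i = ⟨1, by omega⟩ := Fin.ext h
        rw [hiz, hb₂1, sub_sub_cancel_left]
        exact Submodule.neg_mem _ (Submodule.smul_mem_smul hcm Submodule.mem_top)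
    · rw [hb₂2 i hi, sub_self]
      exact Submodule.zero_mem _
  refine ⟨b₂, hb₂0, ?_, hb₂2, hortho, hmod, ?_⟩
  · rw [hb₂1, hc]
  · -- chain equivalence
    refine ⟨1, ![b, b₂], ?_, rfl, rfl, ?_⟩
    · intro i
      fin_cases i
      · exact hb
      · exact hortho
    · intro i
      fin_cases i
      simp only [Fin.castSucc, Fin.succ, Matrix.cons_val_zero, Matrix.cons_val_one,
        Matrix.head_cons, Fin.castAdd, Fin.castLE]
      set f : Fin (n - 2) → V := fun j => b ⟨(j : ℕ) + 2, by omega⟩ with hf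
      have hfinj : Function.Injective f := by
        intro a a' haa
        have := b.injective haa
        have : (a : ℕ) + 2 = (a' : ℕ) + 2 := congrArg Fin.val this
        exact Fin.ext (by omega)
      have hsub : Set.range f ⊆ Set.range b ∩ Set.range b₂ := by
        rintro x ⟨j, rfl⟩
        constructor
        · exact ⟨_, rfl⟩
        · exact ⟨⟨(j : ℕ) + 2, by omega⟩, hb₂2 _ (by simp)⟩
      have hcard : (Set.range f).ncard = n - 2 := by
        rw [← Set.image_univ, Set.ncard_image_of_injective _ hfinj, Set.ncard_univ]
        simp
      calc n - 2 = (Set.range f).ncard := hcard.symm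
        _ ≤ _ := Set.ncard_le_ncard hsub ((Set.finite_range b).inter_of_left _)
end

section
/- Let R be a commutative local ring with maximal ideal m, and let V be an inner product space over R. If B₁ = (u₁,…,uₙ) and B₂ = (v₁,…,vₙ) are orthogonal bases of V with uᵢ ≡ vᵢ mod m for all i (i.e. B₁ and B₂ have the same image in V ⊗_R R/m), then B₁ ≈_R B₂. -/
open Function TensorProduct

set_option maxHeartbeats 1000000

section ChainAux

variable {R : Type*} [CommRing R] [IsLocalRing R] {V : Type*} [AddCommGroup V] [Module R V]
  {n : ℕ} {B : LinearMap.BilinForm R V}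

namespace ChainAux

lemma repr_mem_max (s : Module.Basis (Fin n) R V) {x : V}
    (hx : x ∈ (IsLocalRing.maximalIdeal R) • (⊤ : Submodule R V)) (i : Fin n) :
    s.repr x i ∈ IsLocalRing.maximalIdeal R := by
  refine Submodule.smul_induction_on hx ?_ ?_
  · intro r hr m _
    rw [map_smul]
    exact Ideal.mul_mem_right _ _ hr
  · intro x y hx hy
    rw [map_add]
    exact Ideal.add_mem _ hx hy

lemma isUnit_of_sub_one_mem {a : R} (h : a - 1 ∈ IsLocalRing.maximalIdeal R) : IsUnit a := by
  by_contra hu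
  have ha : a ∈ IsLocalRing.maximalIdeal R := (IsLocalRing.mem_maximalIdeal a).2 hu
  have h1 : (1 : R) ∈ IsLocalRing.maximalIdeal R := by
    have h2 := Ideal.sub_mem _ ha h
    simp only [sub_sub_cancel] at h2
    exact h2
  exact (IsLocalRing.maximalIdeal.isMaximal R).ne_top (Ideal.eq_top_of_isUnit_mem _ h1 isUnit_one)

lemma diag_isUnit (hB : Function.Bijective B) (s : Module.Basis (Fin n) R V)
    (hs : IsOrthoBasis B s) (i : Fin n) : IsUnit (B (s i) (s i)) := by
  by_contra hu
  set d := B (s i) (s i) with hd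
  have hdm : d ∈ IsLocalRing.maximalIdeal R := (IsLocalRing.mem_maximalIdeal d).2 hu
  have hmap : B (s i) = d • s.coord i := by
    refine s.ext fun j => ?_
    rcases eq_or_ne i j with rfl | hij
    · simp [Module.Basis.coord_apply, Module.Basis.repr_self, hd]
    · simp [hs i j hij, Module.Basis.coord_apply, Module.Basis.repr_self_apply, hij.symm]
  let e := LinearEquiv.ofBijective B hB
  have hsi : s i = e.symm (B (s i)) := by
    have : e (s i) = B (s i) := rfl
    rw [← this, LinearEquiv.symm_apply_apply]
  have hmem : s i ∈ (IsLocalRing.maximalIdeal R) • (⊤ : Submodule R V) := by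
    rw [hsi, hmap, map_smul]
    exact Submodule.smul_mem_smul hdm Submodule.mem_top
  have := repr_mem_max s hmem i
  rw [Module.Basis.repr_self_apply] at this
  simp only [if_pos rfl] at this
  exact (IsLocalRing.maximalIdeal.isMaximal R).ne_top
    (Ideal.eq_top_of_isUnit_mem _ this isUnit_one)

lemma ncard_step (s t : Module.Basis (Fin n) R V) (p q : Fin n)
    (h : ∀ i, i ≠ p → i ≠ q → t i = s i) :
    n - 2 ≤ (Set.range ⇑s ∩ Set.range ⇑t).ncard := by
  have hsub : ⇑s '' ({p, q}ᶜ) ⊆ Set.range ⇑s ∩ Set.range ⇑t := by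
    rintro _ ⟨i, hi, rfl⟩
    simp only [Set.mem_compl_iff, Set.mem_insert_iff, Set.mem_singleton_iff, not_or] at hi
    exact ⟨⟨i, rfl⟩, ⟨i, h i hi.1 hi.2⟩⟩
  have h1 : (({p, q} : Set (Fin n))ᶜ).ncard = n - ({p, q} : Set (Fin n)).ncard := by
    have h2 := Set.ncard_add_ncard_compl ({p, q} : Set (Fin n))
    have h3 : Nat.card (Fin n) = n := by simp
    omega
  have h2 : ({p, q} : Set (Fin n)).ncard ≤ 2 := by
    refine le_trans (Set.ncard_insert_le _ _) ?_
    simp [Set.ncard_singleton]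
  calc n - 2 ≤ n - ({p, q} : Set (Fin n)).ncard := Nat.sub_le_sub_left h2 n
    _ = (({p, q} : Set (Fin n))ᶜ).ncard := h1.symm
    _ = (⇑s '' ({p, q} : Set (Fin n))ᶜ).ncard := (Set.ncard_image_of_injective _ s.injective).symm
    _ ≤ _ := Set.ncard_le_ncard hsub (Set.toFinite _)

lemma chainEquiv_step (s t : Module.Basis (Fin n) R V) (hs : IsOrthoBasis B s) (ht : IsOrthoBasis B t)
    (p q : Fin n) (h : ∀ i, i ≠ p → i ≠ q → t i = s i) : ChainEquiv B s t := by
  refine ⟨1, ![s, t], ?_, rfl, rfl, ?_⟩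
  · intro i
    fin_cases i <;> simpa
  · intro i
    fin_cases i
    simpa using ncard_step s t p q h

lemma chainEquiv_of_eq (s t : Module.Basis (Fin n) R V) (hs : IsOrthoBasis B s) (ht : IsOrthoBasis B t)
    (h : ∀ i, s i = t i) : ChainEquiv B s t := by
  refine ⟨1, ![s, t], ?_, rfl, rfl, ?_⟩
  · intro i
    fin_cases i <;> simpa
  · intro i
    fin_cases i
    have hst : ⇑s = ⇑t := funext h
    have heq : (Set.range ⇑s ∩ Set.range ⇑t) = Set.range ⇑s := by rw [hst, Set.inter_self]
    have hb : n - 2 ≤ (Set.range ⇑s ∩ Set.range ⇑t).ncard := by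
      rw [heq, ← Set.image_univ, Set.ncard_image_of_injective _ s.injective]
      have : (Set.univ : Set (Fin n)).ncard = n := by simp [Set.ncard_univ]
      omega
    simpa using hb

omit [IsLocalRing R] in
lemma chainEquiv_trans {a b c : Module.Basis (Fin n) R V} (h1 : ChainEquiv B a b)
    (h2 : ChainEquiv B b c) : ChainEquiv B a c := by
  obtain ⟨r1, s1, ho1, h10, h1l, h1a⟩ := h1
  obtain ⟨r2, s2, ho2, h20, h2l, h2a⟩ := h2
  classical
  have g1 : ∀ k : Fin (r1 + 1), (k : ℕ) = 0 → s1 k = a := by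
    intro k hk
    have : k = 0 := by ext; simpa using hk
    rw [this, h10]
  have g1l : ∀ k : Fin (r1 + 1), (k : ℕ) = r1 → s1 k = b := by
    intro k hk
    have : k = Fin.last r1 := by ext; simpa using hk
    rw [this, h1l]
  have g20 : ∀ k : Fin (r2 + 1), (k : ℕ) = 0 → s2 k = b := by
    intro k hk
    have : k = 0 := by ext; simpa using hk
    rw [this, h20]
  have g2l : ∀ k : Fin (r2 + 1), (k : ℕ) = r2 → s2 k = c := by
    intro k hk
    have : k = Fin.last r2 := by ext; simpa using hk
    rw [this, h2l]
  refine ⟨r1 + r2, fun i => if h : (i : ℕ) < r1 + 1 then s1 ⟨i, h⟩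
    else s2 ⟨(i : ℕ) - r1, by omega⟩, ?_, ?_, ?_, ?_⟩
  · intro i
    dsimp only
    split_ifs
    · exact ho1 _
    · exact ho2 _
  · dsimp only
    rw [dif_pos (by simp)]
    exact g1 _ (by simp)
  · dsimp only
    split_ifs with h
    · have hr2 : r2 = 0 := by simp only [Fin.val_last] at h; omega
      have hbc : b = c := by
        rw [← g20 0 (by simp), g2l 0 (by simp [hr2])]
      exact (g1l _ (by simp [Fin.val_last]; omega)).trans hbc
    · exact g2l _ (by simp only [Fin.val_last] at h ⊢; omega)
  · intro i
    dsimp only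
    have e1 : ((i.castSucc : Fin (r1 + r2 + 1)) : ℕ) = (i : ℕ) := rfl
    have e2 : ((i.succ : Fin (r1 + r2 + 1)) : ℕ) = (i : ℕ) + 1 := rfl
    rcases Nat.lt_or_ge ((i : ℕ) + 1) (r1 + 1) with hlt | hge
    · rw [dif_pos (by rw [e1]; omega), dif_pos (by rw [e2]; omega)]
      have hj := h1a ⟨(i : ℕ), by omega⟩
      have hA : (⟨(i : ℕ), by omega⟩ : Fin r1).castSucc
          = ⟨((i.castSucc : Fin (r1 + r2 + 1)) : ℕ), by rw [e1]; omega⟩ := by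
        ext; simp [e1]
      have hB : (⟨(i : ℕ), by omega⟩ : Fin r1).succ
          = ⟨((i.succ : Fin (r1 + r2 + 1)) : ℕ), by rw [e2]; omega⟩ := by
        ext; simp [e2]
      rw [hA, hB] at hj
      exact hj
    · have key : ∀ (x : Fin (r1 + r2 + 1)) (hx : r1 ≤ (x : ℕ)) (hx2 : (x : ℕ) - r1 < r2 + 1),
          (if h : (x : ℕ) < r1 + 1 then s1 ⟨x, h⟩ else s2 ⟨(x : ℕ) - r1, by omega⟩)
            = s2 ⟨(x : ℕ) - r1, hx2⟩ := by
        intro x hx hx2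
        split_ifs with h
        · rw [g1l _ (show ((⟨(x : ℕ), h⟩ : Fin (r1 + 1)) : ℕ) = r1 by simp; omega),
              g20 _ (show (((⟨(x : ℕ) - r1, hx2⟩ : Fin (r2 + 1))) : ℕ) = 0 by simp; omega)]
        · rfl
      rw [key i.castSucc (by omega) (by rw [e1]; omega),
          key i.succ (by rw [e2]; omega) (by rw [e2]; omega)]
      have hj := h2a ⟨(i : ℕ) - r1, by omega⟩
      have hA : (⟨(i : ℕ) - r1, by omega⟩ : Fin r2).castSucc
          = ⟨((i.castSucc : Fin (r1 + r2 + 1)) : ℕ) - r1, by rw [e1]; omega⟩ := by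
        ext; simp [e1]
      have hB : (⟨(i : ℕ) - r1, by omega⟩ : Fin r2).succ
          = ⟨((i.succ : Fin (r1 + r2 + 1)) : ℕ) - r1, by rw [e2]; omega⟩ := by
        ext; simp [e2]; omega
      rw [hA, hB] at hj
      exact hj

lemma twoStep (hB : Function.Bijective B) (hsymm : ∀ x y, B x y = B y x)
    (s : Module.Basis (Fin n) R V) (hs : IsOrthoBasis B s)
    (p q : Fin n) (hpq : p ≠ q) (α β : R) (hα : α - 1 ∈ IsLocalRing.maximalIdeal R)
    (hβ : β ∈ IsLocalRing.maximalIdeal R) :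
    ∃ t : Module.Basis (Fin n) R V, IsOrthoBasis B t ∧ ChainEquiv B s t ∧
      t p = α • s p + β • s q ∧ (∀ i, i ≠ p → i ≠ q → t i = s i) ∧
      (∀ i, t i - s i ∈ (IsLocalRing.maximalIdeal R) • (⊤ : Submodule R V)) := by
  classical
  have hαu : IsUnit α := isUnit_of_sub_one_mem hα
  set dp := B (s p) (s p) with hdp_def
  set dq := B (s q) (s q) with hdq_def
  have hdpu : IsUnit dp := diag_isUnit hB s hs p
  have hadu : IsUnit (α * dp) := hαu.mul hdpu
  set w : R := β * dq * ((hadu.unit⁻¹ : Rˣ) : R) with hw_def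
  have hwm : w ∈ IsLocalRing.maximalIdeal R := by
    rw [hw_def]
    exact Ideal.mul_mem_right _ _ (Ideal.mul_mem_right _ _ hβ)
  have hw_key : α * w * dp = β * dq := by
    have h1 : (α * dp) * ((hadu.unit⁻¹ : Rˣ) : R) = 1 := hadu.mul_val_inv
    calc α * w * dp = (β * dq) * ((α * dp) * ((hadu.unit⁻¹ : Rˣ) : R)) := by ring
      _ = β * dq := by rw [h1, mul_one]
  set x : V := α • s p + β • s q with hx_def
  set y : V := s q - w • s p with hy_def
  set Δ : R := α + β * w with hΔ_def
  have hΔu : IsUnit Δ := by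
    refine isUnit_of_sub_one_mem ?_
    have : Δ - 1 = (α - 1) + β * w := by rw [hΔ_def]; ring
    rw [this]
    exact Ideal.add_mem _ hα (Ideal.mul_mem_right _ _ hβ)
  have hΔ1 : ((hΔu.unit⁻¹ : Rˣ) : R) * Δ = 1 := hΔu.val_inv_mul
  set e' : R := ((hΔu.unit⁻¹ : Rˣ) : R) with he_def
  set g : Fin n → V := fun i => if i = p then x else if i = q then y else s i with hg_def
  set ginv : Fin n → V := fun i => if i = p then e' • (s p - β • s q)
    else if i = q then e' • (w • s p + α • s q) else s i with hginv_def
  set fl : V →ₗ[R] V := Module.Basis.constr (M' := V) s R g with hfl_def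
  set gl : V →ₗ[R] V := Module.Basis.constr (M' := V) s R ginv with hgl_def
  have hflp : fl (s p) = x := by rw [hfl_def, Module.Basis.constr_basis]; simp [hg_def]
  have hflq : fl (s q) = y := by rw [hfl_def, Module.Basis.constr_basis]; simp [hg_def, hpq.symm]
  have hfli : ∀ i, i ≠ p → i ≠ q → fl (s i) = s i := by
    intro i h1 h2; rw [hfl_def, Module.Basis.constr_basis]; simp [hg_def, h1, h2]
  have hglp : gl (s p) = e' • (s p - β • s q) := by
    rw [hgl_def, Module.Basis.constr_basis]; simp [hginv_def]
  have hglq : gl (s q) = e' • (w • s p + α • s q) := by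
    rw [hgl_def, Module.Basis.constr_basis]; simp [hginv_def, hpq.symm]
  have hgli : ∀ i, i ≠ p → i ≠ q → gl (s i) = s i := by
    intro i h1 h2; rw [hgl_def, Module.Basis.constr_basis]; simp [hginv_def, h1, h2]
  have hgf : gl.comp fl = LinearMap.id := by
    refine s.ext fun i => ?_
    rcases eq_or_ne i p with rfl | hip
    · rw [LinearMap.comp_apply, hflp, hx_def, map_add, map_smul, map_smul, hglp, hglq,
        LinearMap.id_apply]
      match_scalars
      · linear_combination hΔ1
      · ring
    rcases eq_or_ne i q with rfl | hiq
    · rw [LinearMap.comp_apply, hflq, hy_def, map_sub, map_smul, hglq, hglp, LinearMap.id_apply]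
      match_scalars
      · ring
      · linear_combination hΔ1
    · rw [LinearMap.comp_apply, hfli i hip hiq, hgli i hip hiq, LinearMap.id_apply]
  have hfg : fl.comp gl = LinearMap.id := by
    refine s.ext fun i => ?_
    rcases eq_or_ne i p with rfl | hip
    · rw [LinearMap.comp_apply, hglp, map_smul, map_sub, map_smul, hflp, hflq,
        LinearMap.id_apply, hx_def, hy_def]
      match_scalars
      · linear_combination hΔ1
      · ring
    rcases eq_or_ne i q with rfl | hiq
    · rw [LinearMap.comp_apply, hglq, map_smul, map_add, map_smul, map_smul, hflp, hflq,
        LinearMap.id_apply, hx_def, hy_def]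
      match_scalars
      · ring
      · linear_combination hΔ1
    · rw [LinearMap.comp_apply, hgli i hip hiq, hfli i hip hiq, LinearMap.id_apply]
  set eqv : V ≃ₗ[R] V := LinearEquiv.ofLinear fl gl hfg hgf with heqv_def
  set t : Module.Basis (Fin n) R V := s.map eqv with ht_def
  have htapp : ∀ i, t i = g i := by
    intro i
    rw [ht_def, Module.Basis.map_apply]
    show fl (s i) = g i
    rw [hfl_def, Module.Basis.constr_basis]
  have htp : t p = x := by rw [htapp]; simp [hg_def]
  have htq : t q = y := by rw [htapp]; simp [hg_def, hpq.symm]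
  have hti : ∀ i, i ≠ p → i ≠ q → t i = s i := by
    intro i h1 h2; rw [htapp]; simp [hg_def, h1, h2]
  -- bilinear form computations
  have hBxy : B x y = 0 := by
    rw [hx_def, hy_def]
    simp only [map_add, map_sub, map_smul, LinearMap.add_apply, LinearMap.sub_apply,
      LinearMap.smul_apply, smul_eq_mul]
    rw [hs p q hpq, hs q p hpq.symm, ← hdp_def, ← hdq_def]
    linear_combination -hw_key
  have hBxi : ∀ i, i ≠ p → i ≠ q → B x (s i) = 0 := by
    intro i h1 h2
    rw [hx_def]
    simp only [map_add, map_smul, LinearMap.add_apply, LinearMap.smul_apply, smul_eq_mul]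
    rw [hs p i (Ne.symm h1), hs q i (Ne.symm h2)]
    ring
  have hByi : ∀ i, i ≠ p → i ≠ q → B y (s i) = 0 := by
    intro i h1 h2
    rw [hy_def]
    simp only [map_sub, map_smul, LinearMap.sub_apply, LinearMap.smul_apply, smul_eq_mul]
    rw [hs q i (Ne.symm h2), hs p i (Ne.symm h1)]
    ring
  have hto : IsOrthoBasis B t := by
    intro i j hij
    rcases eq_or_ne i p with rfl | hip
    · rw [htp]
      rcases eq_or_ne j q with rfl | hjq
      · rw [htq]; exact hBxy
      · rw [hti j (Ne.symm hij) hjq]; exact hBxi j (Ne.symm hij) hjq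
    rcases eq_or_ne i q with rfl | hiq
    · rw [htq]
      rcases eq_or_ne j p with rfl | hjp
      · rw [htp, hsymm]; exact hBxy
      · rw [hti j hjp (Ne.symm hij)]; exact hByi j hjp (Ne.symm hij)
    · rw [hti i hip hiq]
      rcases eq_or_ne j p with rfl | hjp
      · rw [htp, hsymm]; exact hBxi i hip hiq
      rcases eq_or_ne j q with rfl | hjq
      · rw [htq, hsymm]; exact hByi i hip hiq
      · rw [hti j hjp hjq]; exact hs i j hij
  refine ⟨t, hto, chainEquiv_step s t hs hto p q hti, htp, hti, ?_⟩
  intro i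
  rcases eq_or_ne i p with rfl | hip
  · rw [htp, hx_def]
    have : α • s i + β • s q - s i = (α - 1) • s i + β • s q := by module
    rw [this]
    exact Submodule.add_mem _ (Submodule.smul_mem_smul hα Submodule.mem_top)
      (Submodule.smul_mem_smul hβ Submodule.mem_top)
  rcases eq_or_ne i q with rfl | hiq
  · rw [htq, hy_def]
    have : s i - w • s p - s i = (-w) • s p := by module
    rw [this]
    exact Submodule.smul_mem_smul (neg_mem hwm) Submodule.mem_top
  · rw [hti i hip hiq]
    simp

lemma absorb_empty (s : Module.Basis (Fin n) R V) (hs : IsOrthoBasis B s) (k : Fin n) (v : V)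
    (hvk : s.repr v k - 1 ∈ IsLocalRing.maximalIdeal R)
    (h0 : ∀ i, i ≠ k → s.repr v i = 0) :
    ∃ t : Module.Basis (Fin n) R V, IsOrthoBasis B t ∧ ChainEquiv B s t ∧ t k = v ∧
      (∀ i, i ≠ k → t i = s i) ∧
      (∀ i, t i - s i ∈ (IsLocalRing.maximalIdeal R) • (⊤ : Submodule R V)) := by
  classical
  set α := s.repr v k with hα_def
  have hαu : IsUnit α := isUnit_of_sub_one_mem hvk
  set u : Fin n → Rˣ := fun i => if i = k then hαu.unit else 1 with hu_def
  set t := s.unitsSMul u with ht_def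
  have htapp : ∀ i, t i = ((u i : Rˣ) : R) • s i := by
    intro i
    rw [ht_def, Module.Basis.unitsSMul_apply, Units.smul_def]
  have hv : v = α • s k := by
    conv_lhs => rw [← Module.Basis.sum_repr s v]
    rw [Finset.sum_eq_single k]
    · intro b _ hb
      rw [h0 b hb, zero_smul]
    · intro hk
      exact absurd (Finset.mem_univ k) hk
  have htk : t k = v := by
    rw [htapp, hu_def]
    simp only [if_pos rfl, IsUnit.unit_spec]
    exact hv.symm
  have hti : ∀ i, i ≠ k → t i = s i := by
    intro i hik
    rw [htapp, hu_def]
    simp [hik]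
  have hto : IsOrthoBasis B t := by
    intro i j hij
    rw [htapp i, htapp j]
    simp only [map_smul, LinearMap.smul_apply, smul_eq_mul]
    rw [hs i j hij]
    ring
  refine ⟨t, hto, chainEquiv_step s t hs hto k k (fun i h1 _ => hti i h1), htk, hti, ?_⟩
  intro i
  rcases eq_or_ne i k with rfl | hik
  · rw [htk, hv]
    have : α • s i - s i = (α - 1) • s i := by module
    rw [this]
    exact Submodule.smul_mem_smul hvk Submodule.mem_top
  · rw [hti i hik, sub_self]
    exact Submodule.zero_mem _

open scoped Classical in
lemma absorb (hB : Function.Bijective B) (hsymm : ∀ x y, B x y = B y x) (N : ℕ) :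
    ∀ (s : Module.Basis (Fin n) R V), IsOrthoBasis B s → ∀ (k : Fin n) (v : V),
    s.repr v k - 1 ∈ IsLocalRing.maximalIdeal R →
    (∀ i, i < k → s.repr v i = 0) →
    (∀ i, k < i → s.repr v i ∈ IsLocalRing.maximalIdeal R) →
    (Finset.univ.filter (fun i => k < i ∧ s.repr v i ≠ 0)).card ≤ N →
    ∃ t : Module.Basis (Fin n) R V, IsOrthoBasis B t ∧ ChainEquiv B s t ∧ t k = v ∧
      (∀ i, i < k → t i = s i) ∧
      (∀ i, t i - s i ∈ (IsLocalRing.maximalIdeal R) • (⊤ : Submodule R V)) := by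
  classical
  induction N with
  | zero =>
    intro s hs k v hvk hv0 hvm hcard
    have hemp : (Finset.univ.filter (fun i => k < i ∧ s.repr v i ≠ 0)) = ∅ :=
      Finset.card_eq_zero.mp (Nat.le_zero.mp hcard)
    have h0 : ∀ i, i ≠ k → s.repr v i = 0 := by
      intro i hik
      rcases lt_or_gt_of_ne hik with h | h
      · exact hv0 i h
      · by_contra hne
        have : i ∈ (Finset.univ.filter (fun i => k < i ∧ s.repr v i ≠ 0)) := by
          simp [h, hne]
        rw [hemp] at this
        exact absurd this (Finset.notMem_empty i)
    obtain ⟨t, hto, hch, htk, hti, hcong⟩ := absorb_empty s hs k v hvk h0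
    exact ⟨t, hto, hch, htk, fun i hik => hti i (ne_of_lt hik), hcong⟩
  | succ N ih =>
    intro s hs k v hvk hv0 hvm hcard
    rcases Finset.eq_empty_or_nonempty
      (Finset.univ.filter (fun i => k < i ∧ s.repr v i ≠ 0)) with hemp | ⟨j, hj⟩
    · have h0 : ∀ i, i ≠ k → s.repr v i = 0 := by
        intro i hik
        rcases lt_or_gt_of_ne hik with h | h
        · exact hv0 i h
        · by_contra hne
          have : i ∈ (Finset.univ.filter (fun i => k < i ∧ s.repr v i ≠ 0)) := by
            simp [h, hne]
          rw [hemp] at this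
          exact absurd this (Finset.notMem_empty i)
      obtain ⟨t, hto, hch, htk, hti, hcong⟩ := absorb_empty s hs k v hvk h0
      exact ⟨t, hto, hch, htk, fun i hik => hti i (ne_of_lt hik), hcong⟩
    · rw [Finset.mem_filter] at hj
      obtain ⟨-, hkj, hj0⟩ := hj
      have hkj' : k ≠ j := ne_of_lt hkj
      obtain ⟨t, hto, hch, htp, hti, hcong⟩ := twoStep hB hsymm s hs k j hkj'
        (s.repr v k) (s.repr v j) hvk (hvm j hkj)
      set c : Fin n → R := fun i => if i = k then 1 else if i = j then 0 else s.repr v i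
        with hc_def
      have hsum : ∑ i, c i • t i = v := by
        have hjk : j ∈ Finset.univ.erase k := Finset.mem_erase.mpr ⟨(Ne.symm hkj'), Finset.mem_univ j⟩
        have e1 : ∀ (f : Fin n → V), ∑ i, f i
            = (∑ i ∈ (Finset.univ.erase k).erase j, f i) + f j + f k := by
          intro f
          rw [← Finset.sum_erase_add _ f (Finset.mem_univ k), ← Finset.sum_erase_add _ f hjk]
        rw [e1, ← Module.Basis.sum_repr s v, e1 (fun i => s.repr v i • s i)]
        have hterm : ∀ i ∈ (Finset.univ.erase k).erase j, c i • t i = s.repr v i • s i := by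
          intro i hi
          rw [Finset.mem_erase, Finset.mem_erase] at hi
          rw [hti i hi.2.1 hi.1, hc_def]
          simp [hi.2.1, hi.1]
        rw [Finset.sum_congr rfl hterm]
        have hck : c k = 1 := by simp [hc_def]
        have hcj : c j = 0 := by simp [hc_def, Ne.symm hkj']
        rw [hck, hcj, zero_smul, one_smul, htp]
        module
      have hrepr : ∀ i, t.repr v i = c i := by
        intro i
        rw [← hsum, Module.Basis.repr_sum_self]
      have hvk_t : t.repr v k - 1 ∈ IsLocalRing.maximalIdeal R := by
        rw [hrepr]
        simp [hc_def]
      have hv0_t : ∀ i, i < k → t.repr v i = 0 := by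
        intro i hik
        rw [hrepr, hc_def]
        have h1 : i ≠ k := ne_of_lt hik
        have h2 : i ≠ j := ne_of_lt (lt_trans hik hkj)
        simp only [if_neg h1, if_neg h2]
        exact hv0 i hik
      have hvm_t : ∀ i, k < i → t.repr v i ∈ IsLocalRing.maximalIdeal R := by
        intro i hik
        rw [hrepr, hc_def]
        have h1 : i ≠ k := Ne.symm (ne_of_lt hik)
        rcases eq_or_ne i j with rfl | h2
        · simp only [if_neg h1, if_pos rfl]
          exact Submodule.zero_mem _
        · simp only [if_neg h1, if_neg h2]
          exact hvm i hik
      have hcard_t : (Finset.univ.filter (fun i => k < i ∧ t.repr v i ≠ 0)).card ≤ N := by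
        have hsub : (Finset.univ.filter (fun i => k < i ∧ t.repr v i ≠ 0))
            ⊆ (Finset.univ.filter (fun i => k < i ∧ s.repr v i ≠ 0)).erase j := by
          intro i hi
          rw [Finset.mem_filter] at hi
          obtain ⟨-, hki, hi0⟩ := hi
          rw [hrepr, hc_def] at hi0
          have h1 : i ≠ k := Ne.symm (ne_of_lt hki)
          have h2 : i ≠ j := by
            intro h
            subst h
            simp [h1] at hi0
          rw [Finset.mem_erase, Finset.mem_filter]
          simp only [if_neg h1, if_neg h2] at hi0
          exact ⟨h2, Finset.mem_univ i, hki, hi0⟩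
        have hjmem : j ∈ (Finset.univ.filter (fun i => k < i ∧ s.repr v i ≠ 0)) := by
          simp [hkj, hj0]
        have := Finset.card_le_card hsub
        rw [Finset.card_erase_of_mem hjmem] at this
        have hpos : 0 < (Finset.univ.filter (fun i => k < i ∧ s.repr v i ≠ 0)).card :=
          Finset.card_pos.mpr ⟨j, hjmem⟩
        omega
      obtain ⟨t', hto', hch', htk', hlt', hcong'⟩ := ih t hto k v hvk_t hv0_t hvm_t hcard_t
      refine ⟨t', hto', chainEquiv_trans hch hch', htk', ?_, ?_⟩
      · intro i hik
        rw [hlt' i hik, hti i (ne_of_lt hik) (ne_of_lt (lt_trans hik hkj))]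
      · intro i
        have := Submodule.add_mem _ (hcong' i) (hcong i)
        simpa [sub_add_sub_cancel] using this

lemma outer (hB : Function.Bijective B) (hsymm : ∀ x y, B x y = B y x)
    (c : Module.Basis (Fin n) R V) (hc : IsOrthoBasis B c) (d : ℕ) :
    ∀ (k : ℕ), n - k ≤ d → ∀ s : Module.Basis (Fin n) R V, IsOrthoBasis B s →
    (∀ i : Fin n, (i : ℕ) < k → s i = c i) →
    (∀ i, s i - c i ∈ (IsLocalRing.maximalIdeal R) • (⊤ : Submodule R V)) →
    ChainEquiv B s c := by
  classical
  induction d with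
  | zero =>
    intro k hk s hso heq _
    exact chainEquiv_of_eq s c hso hc (fun i => heq i (by have := i.isLt; omega))
  | succ d ih =>
    intro k hk s hso heq hcong
    by_cases hkn : n ≤ k
    · exact chainEquiv_of_eq s c hso hc (fun i => heq i (by have := i.isLt; omega))
    · push_neg at hkn
      set kf : Fin n := ⟨k, hkn⟩ with hkf_def
      set v := c kf with hv_def
      have hvsub : v - s kf ∈ (IsLocalRing.maximalIdeal R) • (⊤ : Submodule R V) := by
        have := neg_mem (hcong kf)
        simpa [hv_def] using this
      have hvk : s.repr v kf - 1 ∈ IsLocalRing.maximalIdeal R := by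
        have h1 := repr_mem_max s hvsub kf
        rw [map_sub, Finsupp.sub_apply] at h1
        rwa [Module.Basis.repr_self_apply, if_pos rfl] at h1
      have hexp : ∀ i, B v (s i) = s.repr v i * B (s i) (s i) := by
        intro i
        conv_lhs => rw [← Module.Basis.sum_repr s v]
        rw [map_sum, LinearMap.sum_apply]
        rw [Finset.sum_eq_single i]
        · rw [map_smul, LinearMap.smul_apply, smul_eq_mul]
        · intro b _ hbi
          rw [map_smul, LinearMap.smul_apply, smul_eq_mul, hso b i hbi, mul_zero]
        · intro hi
          exact absurd (Finset.mem_univ i) hi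
      have hv0 : ∀ i, i < kf → s.repr v i = 0 := by
        intro i hik
        have hik' : i ≠ kf := ne_of_lt hik
        have h1 : B v (s i) = 0 := by
          rw [heq i (by exact hik), hv_def]
          exact hc kf i (Ne.symm hik')
        rw [hexp i] at h1
        have hu := diag_isUnit hB s hso i
        calc s.repr v i = s.repr v i * ((B (s i)) (s i) * ((hu.unit⁻¹ : Rˣ) : R)) := by
              rw [hu.mul_val_inv, mul_one]
          _ = (s.repr v i * (B (s i)) (s i)) * ((hu.unit⁻¹ : Rˣ) : R) := by ring
          _ = 0 := by rw [h1, zero_mul]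
      have hvm : ∀ i, kf < i → s.repr v i ∈ IsLocalRing.maximalIdeal R := by
        intro i hik
        have h1 := repr_mem_max s hvsub i
        rw [map_sub, Finsupp.sub_apply, Module.Basis.repr_self_apply,
          if_neg (Ne.symm (ne_of_gt hik)), sub_zero] at h1
        exact h1
      obtain ⟨t, hto, hch, htk, hlt, hcong'⟩ := absorb hB hsymm
        (Finset.univ.filter (fun i => kf < i ∧ s.repr v i ≠ 0)).card s hso kf v hvk hv0 hvm
        le_rfl
      have hres : ChainEquiv B t c := by
        refine ih (k + 1) (by omega) t hto ?_ ?_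
        · intro i hi
          rcases Nat.lt_or_ge (i : ℕ) k with h | h
          · rw [hlt i (by simpa [hkf_def, Fin.lt_def] using h), heq i h]
          · have : i = kf := by
              ext
              show (i : ℕ) = k
              omega
            rw [this, htk, hv_def]
        · intro i
          have h1 := Submodule.add_mem _ (hcong' i) (hcong i)
          simpa [sub_add_sub_cancel] using h1
      exact chainEquiv_trans hch hres

end ChainAux

end ChainAux

/-- Let `R` be a commutative local ring with maximal ideal `m` and let `(V, B)` be an
inner product space over `R`.  If two orthogonal bases of `V` are congruent modulo `m`
(i.e. have the same image in `V ⊗_R R/m`), then they are chain equivalent over `R`. -/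
theorem chainEquiv_of_eq_mod_maximalIdeal {R : Type*} [CommRing R] [IsLocalRing R]
    {V : Type*} [AddCommGroup V] [Module R V] (B : LinearMap.BilinForm R V)
    (hB : IsInnerProductSpace R V B) {n : ℕ} (b c : Module.Basis (Fin n) R V)
    (hb : IsOrthoBasis B b) (hc : IsOrthoBasis B c)
    (hmod : ∀ i, b i - c i ∈ (IsLocalRing.maximalIdeal R) • (⊤ : Submodule R V)) :
    ChainEquiv B b c := by
  exact ChainAux.outer hB.nondegenerate hB.symm c hc n 0 (by omega) b hb
    (fun i hi => absurd hi (by omega)) hmod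
end

section
/- Let R be a commutative local ring with maximal ideal m and residue field F, and let V be an inner product space over R. Then: (i) every orthogonal basis (ū₁,…,ūₙ) of the inner product space V_F = V ⊗_R F over F is the image mod m of some orthogonal basis (u₁,…,uₙ) of V (called a lift); (ii) if two orthogonal bases ū, v̄ of V_F differ in at most two places, then there exist lifts u of ū and v of v̄ that differ in at most two places. -/
open Function TensorProduct

section LiftingHelpers

variable {R : Type*} [CommRing R] [IsLocalRing R] {V : Type*} [AddCommGroup V] [Module R V]

/-- An `R`-scalar acting on the residue-field base change acts through the residue map. -/
theorem OBL.rsmul_eq (r : R) (t : (IsLocalRing.ResidueField R) ⊗[R] V) :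
    r • t = IsLocalRing.residue R r • t := by
  rw [← IsLocalRing.ResidueField.algebraMap_eq, algebraMap_smul]

/-- The residue of `B x y` is the base-changed form evaluated on the reductions. -/
theorem OBL.residue_eq_baseChange (B : LinearMap.BilinForm R V) (x y : V) :
    IsLocalRing.residue R (B x y) =
      (LinearMap.BilinForm.baseChange (IsLocalRing.ResidueField R) B)
        ((1 : IsLocalRing.ResidueField R) ⊗ₜ[R] x)
        ((1 : IsLocalRing.ResidueField R) ⊗ₜ[R] y) := by
  rw [LinearMap.BilinForm.baseChange_tmul, mul_one, ← Algebra.algebraMap_eq_smul_one,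
    IsLocalRing.ResidueField.algebraMap_eq]

/-- Any pointwise lift of a basis of the reduction is itself a basis. -/
theorem OBL.exists_basis_of_lift (hfree : Module.Free R V) (hfin : Module.Finite R V) {n : ℕ}
    (bF : Module.Basis (Fin n) (IsLocalRing.ResidueField R) ((IsLocalRing.ResidueField R) ⊗[R] V))
    (w : Fin n → V) (hw : ∀ i, (1 : IsLocalRing.ResidueField R) ⊗ₜ[R] w i = bF i) :
    ∃ u : Module.Basis (Fin n) R V, ⇑u = w := by
  haveI := hfree; haveI := hfin
  have hspan : Submodule.span R (Set.range w) = ⊤ :=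
    IsLocalRing.span_eq_top_of_tmul_eq_basis (R := R) (f := w) bF hw
  let b : Module.Basis (Module.Free.ChooseBasisIndex R V) R V := Module.Free.chooseBasis R V
  have e : Module.Free.ChooseBasisIndex R V ≃ Fin n :=
    (b.baseChange (IsLocalRing.ResidueField R)).indexEquiv bF
  let b0 : Module.Basis (Fin n) R V := b.reindex e
  let g : V →ₗ[R] V := b0.constr ℕ w
  have hg : Surjective g := by
    rw [← LinearMap.range_eq_top, ← top_le_iff, ← hspan, Submodule.span_le]
    rintro _ ⟨i, rfl⟩
    exact ⟨b0 i, b0.constr_basis ℕ w i⟩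
  have hbij : Bijective g := OrzechProperty.bijective_of_surjective_endomorphism g hg
  refine ⟨b0.map (LinearEquiv.ofBijective g hbij), ?_⟩
  funext i
  rw [Module.Basis.map_apply, LinearEquiv.ofBijective_apply]
  exact b0.constr_basis ℕ w i

/-- The diagonal entries of the Gram matrix of any lift of an orthogonal basis are units. -/
theorem OBL.isUnit_diag (B : LinearMap.BilinForm R V) (hB : IsInnerProductSpace R V B) {n : ℕ}
    (bF : Module.Basis (Fin n) (IsLocalRing.ResidueField R) ((IsLocalRing.ResidueField R) ⊗[R] V))
    (hbF : IsOrthoBasis (LinearMap.BilinForm.baseChange (IsLocalRing.ResidueField R) B) bF)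
    (w : Fin n → V) (hw : ∀ i, (1 : IsLocalRing.ResidueField R) ⊗ₜ[R] w i = bF i)
    (j : Fin n) : IsUnit (B (w j) (w j)) := by
  obtain ⟨u, hu⟩ := OBL.exists_basis_of_lift hB.free hB.finite bF w hw
  by_contra h
  have hm : ∀ k, IsLocalRing.residue R (B (w j) (w k)) = 0 := by
    intro k
    by_cases hk : k = j
    · subst hk
      exact Ideal.Quotient.eq_zero_iff_mem.2
        ((IsLocalRing.mem_maximalIdeal _).mpr (mem_nonunits_iff.mpr h))
    · rw [OBL.residue_eq_baseChange, hw, hw]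
      exact hbF j k (fun hjk => hk hjk.symm)
  let e := LinearEquiv.ofBijective B hB.nondegenerate
  have hrepr : B (w j) = ∑ k, (B (w j) (w k)) • Module.Basis.coord u k := by
    apply u.ext; intro l
    rw [LinearMap.sum_apply, Finset.sum_eq_single l]
    · rw [LinearMap.smul_apply, Module.Basis.coord_apply, Module.Basis.repr_self, Finsupp.single_eq_same,
        smul_eq_mul, mul_one, congrFun hu l]
    · intro m _ hml
      rw [LinearMap.smul_apply, Module.Basis.coord_apply, Module.Basis.repr_self,
        Finsupp.single_eq_of_ne hml, smul_zero]
    · intro hl; exact absurd (Finset.mem_univ l) hl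
  have hwj : w j = ∑ k, (B (w j) (w k)) • e.symm (Module.Basis.coord u k) := by
    have h1 : w j = e.symm (B (w j)) := by
      rw [show B (w j) = e (w j) from rfl, LinearEquiv.symm_apply_apply]
    conv_lhs => rw [h1, hrepr]
    rw [map_sum]
    simp only [map_smul]
  have hz : (1 : IsLocalRing.ResidueField R) ⊗ₜ[R] w j = 0 := by
    rw [hwj, tmul_sum]
    apply Finset.sum_eq_zero
    intro k _
    rw [tmul_smul, OBL.rsmul_eq, hm, zero_smul]
  rw [hw j] at hz
  exact bF.ne_zero j hz

/-- Gram–Schmidt lifting: any lift of an orthogonal basis which is already pairwise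
orthogonal on a set `S` can be corrected, away from `S`, to an orthogonal basis lift. -/
theorem OBL.key (B : LinearMap.BilinForm R V) (hB : IsInnerProductSpace R V B) {n : ℕ}
    (bF : Module.Basis (Fin n) (IsLocalRing.ResidueField R) ((IsLocalRing.ResidueField R) ⊗[R] V))
    (hbF : IsOrthoBasis (LinearMap.BilinForm.baseChange (IsLocalRing.ResidueField R) B) bF) :
    ∀ (k : ℕ) (S : Finset (Fin n)) (w : Fin n → V), Sᶜ.card ≤ k →
      (∀ i, (1 : IsLocalRing.ResidueField R) ⊗ₜ[R] w i = bF i) →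
      (∀ i ∈ S, ∀ j ∈ S, i ≠ j → B (w i) (w j) = 0) →
      ∃ u : Module.Basis (Fin n) R V, IsOrthoBasis B u ∧
        (∀ i, (1 : IsLocalRing.ResidueField R) ⊗ₜ[R] u i = bF i) ∧ ∀ i ∈ S, u i = w i := by
  intro k
  induction k with
  | zero =>
    intro S w hcard hw hS
    have hS' : S = Finset.univ := by
      have : Sᶜ = ∅ := Finset.card_eq_zero.mp (Nat.le_zero.mp hcard)
      rwa [Finset.compl_eq_empty_iff] at this
    obtain ⟨u, hu⟩ := OBL.exists_basis_of_lift hB.free hB.finite bF w hw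
    refine ⟨u, ?_, ?_, ?_⟩
    · intro i j hij
      rw [show u i = w i from congrFun hu i, show u j = w j from congrFun hu j]
      exact hS i (hS' ▸ Finset.mem_univ i) j (hS' ▸ Finset.mem_univ j) hij
    · intro i; rw [show u i = w i from congrFun hu i]; exact hw i
    · intro i _; exact congrFun hu i
  | succ k ih =>
    intro S w hcard hw hS
    by_cases hle : Sᶜ.card ≤ k
    · exact ih S w hle hw hS
    · have hne : Sᶜ.Nonempty := Finset.card_pos.mp (by omega)
      obtain ⟨i, hi⟩ := hne
      have hiS : i ∉ S := Finset.mem_compl.mp hi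
      have hunit : ∀ j, IsUnit (B (w j) (w j)) := OBL.isUnit_diag B hB bF hbF w hw
      set c : Fin n → R := fun j => (((hunit j).unit⁻¹ : Rˣ) : R) * B (w i) (w j) with hc
      set w' : Fin n → V := Function.update w i (w i - ∑ j ∈ S, c j • w j) with hwdef
      have hw'ne : ∀ l, l ≠ i → w' l = w l := fun l hl => Function.update_of_ne hl _ _
      have hw'i : w' i = w i - ∑ j ∈ S, c j • w j := Function.update_self _ _ _
      have hcres : ∀ j ∈ S, IsLocalRing.residue R (c j) = 0 := by
        intro j hj
        have hij : i ≠ j := fun h => hiS (h ▸ hj)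
        have hz : IsLocalRing.residue R (B (w i) (w j)) = 0 := by
          rw [OBL.residue_eq_baseChange, hw, hw]
          exact hbF i j hij
        simp only [hc, map_mul, hz, mul_zero]
      have hlift' : ∀ l, (1 : IsLocalRing.ResidueField R) ⊗ₜ[R] w' l = bF l := by
        intro l
        by_cases hl : l = i
        · subst hl
          have hzs : (∑ j ∈ S, (1 : IsLocalRing.ResidueField R) ⊗ₜ[R] (c j • w j)) = 0 :=
            Finset.sum_eq_zero fun j hj => by
              rw [tmul_smul, OBL.rsmul_eq, hcres j hj, zero_smul]
          rw [hw'i, tmul_sub, tmul_sum, hzs, sub_zero]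
          exact hw l
        · rw [hw'ne l hl]; exact hw l
      have horthi : ∀ j ∈ S, B (w' i) (w j) = 0 := by
        intro j hj
        rw [hw'i, map_sub, map_sum, LinearMap.sub_apply, LinearMap.sum_apply]
        have hsum : (∑ l ∈ S, (B (c l • w l)) (w j)) = c j * B (w j) (w j) := by
          rw [Finset.sum_eq_single_of_mem j hj]
          · rw [map_smul, LinearMap.smul_apply, smul_eq_mul]
          · intro l hl hlj
            rw [map_smul, LinearMap.smul_apply, hS l hl j hj hlj, smul_zero]
        rw [hsum]
        simp only [hc]
        have hinv : (((hunit j).unit⁻¹ : Rˣ) : R) * B (w j) (w j) = 1 :=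
          (hunit j).val_inv_mul
        calc B (w i) (w j) - (((hunit j).unit⁻¹ : Rˣ) : R) * B (w i) (w j) * B (w j) (w j)
            = B (w i) (w j) - B (w i) (w j) *
              ((((hunit j).unit⁻¹ : Rˣ) : R) * B (w j) (w j)) := by ring
          _ = 0 := by rw [hinv, mul_one, sub_self]
      have hS' : ∀ a ∈ insert i S, ∀ b ∈ insert i S, a ≠ b → B (w' a) (w' b) = 0 := by
        intro a ha b hb hab
        rcases Finset.mem_insert.mp ha with ha' | ha' <;>
          rcases Finset.mem_insert.mp hb with hb' | hb'
        · exact absurd (ha'.trans hb'.symm) hab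
        · subst ha'
          rw [hw'ne b (fun h => hiS (h ▸ hb'))]
          exact horthi b hb'
        · subst hb'
          rw [hw'ne a (fun h => hiS (h ▸ ha')), hB.symm]
          exact horthi a ha'
        · rw [hw'ne a (fun h => hiS (h ▸ ha')), hw'ne b (fun h => hiS (h ▸ hb'))]
          exact hS a ha' b hb' hab
      have hcard' : (insert i S)ᶜ.card ≤ k := by
        rw [Finset.compl_insert, Finset.card_erase_of_mem hi]
        omega
      obtain ⟨u, hu1, hu2, hu3⟩ := ih (insert i S) w' hcard' hlift' hS'
      exact ⟨u, hu1, hu2, fun l hl =>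
        (hu3 l (Finset.mem_insert_of_mem hl)).trans (hw'ne l (fun h => hiS (h ▸ hl)))⟩

end LiftingHelpers

/-- Let `R` be a commutative local ring with residue field `F` and let `(V, B)` be an
inner product space over `R`; consider `V_F = F ⊗_R V` with the induced form.
(i) Every orthogonal basis of `V_F` lifts to an orthogonal basis of `V`.
(ii) If two orthogonal bases of `V_F` differ in at most two places, then they admit
lifts that differ in at most two places. -/
theorem orthoBasis_lifts {R : Type*} [CommRing R] [IsLocalRing R]
    {V : Type*} [AddCommGroup V] [Module R V] (B : LinearMap.BilinForm R V)
    (hB : IsInnerProductSpace R V B) {n : ℕ} :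
    (∀ bF : Module.Basis (Fin n) (IsLocalRing.ResidueField R) ((IsLocalRing.ResidueField R) ⊗[R] V),
      IsOrthoBasis (LinearMap.BilinForm.baseChange (IsLocalRing.ResidueField R) B) bF →
      ∃ u : Module.Basis (Fin n) R V, IsOrthoBasis B u ∧
        ∀ i, (1 : IsLocalRing.ResidueField R) ⊗ₜ[R] (u i) = bF i) ∧
    (∀ bF cF : Module.Basis (Fin n) (IsLocalRing.ResidueField R) ((IsLocalRing.ResidueField R) ⊗[R] V),
      IsOrthoBasis (LinearMap.BilinForm.baseChange (IsLocalRing.ResidueField R) B) bF →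
      IsOrthoBasis (LinearMap.BilinForm.baseChange (IsLocalRing.ResidueField R) B) cF →
      {i | bF i ≠ cF i}.ncard ≤ 2 →
      ∃ u v : Module.Basis (Fin n) R V, IsOrthoBasis B u ∧ IsOrthoBasis B v ∧
        (∀ i, (1 : IsLocalRing.ResidueField R) ⊗ₜ[R] (u i) = bF i) ∧
        (∀ i, (1 : IsLocalRing.ResidueField R) ⊗ₜ[R] (v i) = cF i) ∧
        {i | u i ≠ v i}.ncard ≤ 2) := by
  classical
  have part1 : ∀ bF : Module.Basis (Fin n) (IsLocalRing.ResidueField R)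
      ((IsLocalRing.ResidueField R) ⊗[R] V),
      IsOrthoBasis (LinearMap.BilinForm.baseChange (IsLocalRing.ResidueField R) B) bF →
      ∃ u : Module.Basis (Fin n) R V, IsOrthoBasis B u ∧
        ∀ i, (1 : IsLocalRing.ResidueField R) ⊗ₜ[R] (u i) = bF i := by
    intro bF hbF
    choose w hw using fun i =>
      TensorProduct.mk_surjective R V (IsLocalRing.ResidueField R)
        Ideal.Quotient.mk_surjective (bF i)
    have hw' : ∀ i, (1 : IsLocalRing.ResidueField R) ⊗ₜ[R] w i = bF i := hw
    obtain ⟨u, h1, h2, _⟩ := OBL.key B hB bF hbF n ∅ w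
      (by simp [Finset.card_le_univ]) hw' (by simp)
    exact ⟨u, h1, h2⟩
  refine ⟨part1, ?_⟩
  intro bF cF hbF hcF hd
  obtain ⟨u, hu1, hu2⟩ := part1 bF hbF
  choose w0 hw0 using fun i =>
    TensorProduct.mk_surjective R V (IsLocalRing.ResidueField R)
      Ideal.Quotient.mk_surjective (cF i)
  set w : Fin n → V := fun i => if bF i = cF i then u i else w0 i with hwdef
  have hwlift : ∀ i, (1 : IsLocalRing.ResidueField R) ⊗ₜ[R] w i = cF i := by
    intro i
    by_cases h : bF i = cF i
    · simp only [hwdef, if_pos h]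
      rw [hu2 i, h]
    · simp only [hwdef, if_neg h]
      exact hw0 i
  set S : Finset (Fin n) := Finset.univ.filter (fun i => bF i = cF i) with hSdef
  have hwS : ∀ i ∈ S, w i = u i := by
    intro i hi
    have h := (Finset.mem_filter.mp hi).2
    simp only [hwdef, if_pos h]
  have hortho : ∀ i ∈ S, ∀ j ∈ S, i ≠ j → B (w i) (w j) = 0 := by
    intro i hi j hj hij
    rw [hwS i hi, hwS j hj]
    exact hu1 i j hij
  obtain ⟨v, hv1, hv2, hv3⟩ := OBL.key B hB cF hcF n S w
    (by simpa using (Finset.card_le_univ (Sᶜ : Finset (Fin n)))) hwlift hortho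
  refine ⟨u, v, hu1, hv1, hu2, hv2, ?_⟩
  have hsub : {i | u i ≠ v i} ⊆ {i | bF i ≠ cF i} := by
    intro i hi
    simp only [Set.mem_setOf_eq] at hi ⊢
    intro h
    have hiS : i ∈ S := Finset.mem_filter.mpr ⟨Finset.mem_univ i, h⟩
    exact hi ((hv3 i hiS).trans (hwS i hiS)).symm
  exact le_trans (Set.ncard_le_ncard hsub (Set.toFinite _)) hd
end
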